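/- For centered bivariate Gaussians, if I₁(w, τ₁², τ₂²) = Diag(τ₂²/τ₁², 1/(2τ₁⁴), 1/(2τ₂⁴)) and I₂(w, τ₁², τ₂²) = Diag(τ₁²/τ₂², 1/(2τ₂⁴), 1/(2τ₁⁴)) denote the Fisher information matrices of the two causal parameterizations, and γ is the reparameterization γ(w, τ₁², τ₂²) = (wτ₂²/(w²τ₂²+τ₁²), w²τ₂²+τ₁², τ₁²τ₂²/(w²τ₂²+τ₁²)) with Jacobian J_γ, then det I₁(θ) = det I₂(γ(θ)) · (det J_γ(θ))², and consequently det I₁(θ)/det I₂(γ(θ)) = (τ₂²/(w²τ₂²+τ₁²))² for all θ = (w, τ₁², τ₂²) with τ₁², τ₂² > 0. -/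

import Mathlib

open Matrix

/-- The parameter transformation between the two observationally equivalent
bivariate linear Gaussian SEMs. -/
noncomputable def gammaMap (p : ℝ × ℝ × ℝ) : ℝ × ℝ × ℝ :=
  ⟨p.1 * p.2.2 / (p.1 ^ 2 * p.2.2 + p.2.1),
   p.1 ^ 2 * p.2.2 + p.2.1,
   p.2.1 * p.2.2 / (p.1 ^ 2 * p.2.2 + p.2.1)⟩

/-- The components of `gammaMap`. -/
noncomputable def gammaComp : Fin 3 → (ℝ × ℝ × ℝ) → ℝ
  | 0 => fun p => (gammaMap p).1
  | 1 => fun p => (gammaMap p).2.1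
  | 2 => fun p => (gammaMap p).2.2

/-- Standard basis directions of `ℝ × ℝ × ℝ`. -/
def stdDir : Fin 3 → ℝ × ℝ × ℝ
  | 0 => (1, 0, 0)
  | 1 => (0, 1, 0)
  | 2 => (0, 0, 1)

/-- The Jacobian matrix of `gammaMap` at a point. -/
noncomputable def gammaJacobian (p : ℝ × ℝ × ℝ) : Matrix (Fin 3) (Fin 3) ℝ :=
  Matrix.of fun i j => fderiv ℝ (gammaComp i) p (stdDir j)

/-- Fisher information of the forward parameterization. -/
noncomputable def fisherI1 (p : ℝ × ℝ × ℝ) : Matrix (Fin 3) (Fin 3) ℝ :=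
  Matrix.diagonal ![p.2.2 / p.2.1, 1 / (2 * p.2.1 ^ 2), 1 / (2 * p.2.2 ^ 2)]

/-- Fisher information of the reverse parameterization. -/
noncomputable def fisherI2 (p : ℝ × ℝ × ℝ) : Matrix (Fin 3) (Fin 3) ℝ :=
  Matrix.diagonal ![p.2.1 / p.2.2, 1 / (2 * p.2.2 ^ 2), 1 / (2 * p.2.1 ^ 2)]

/-!
The variables `τ1`, `τ2` are the variances τ₁², τ₂², and `s = w ^ 2 * τ2 + τ1` is the variance of
X(1). Both Fisher informations are diagonal, so `det I₁ = 1 / (4 τ1³ τ2)` and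
`det I₂(γ θ) = s² / (4 τ1³ τ2³)`; the quotient rule gives the Jacobian of `γ` entrywise, with
`det J_γ = τ2 / s`. The first identity is then a computation, and dividing it by
`det I₂(γ θ) ≠ 0` gives the ratio.
-/

theorem HasFDerivAt.div {𝕜 E : Type*} [NontriviallyNormedField 𝕜] [NormedAddCommGroup E]
    [NormedSpace 𝕜 E] {f g : E → 𝕜} {f' g' : E →L[𝕜] 𝕜} {x : E}
    (hf : HasFDerivAt f f' x) (hg : HasFDerivAt g g' x) (hx : g x ≠ 0) :
    HasFDerivAt (fun y => f y / g y) ((g x ^ 2)⁻¹ • (g x • f' - f x • g')) x := by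
  have h := hf.fun_mul ((hasDerivAt_inv hx).comp_hasFDerivAt x hg)
  simp only [Function.comp_def, ← div_eq_mul_inv] at h
  refine h.congr_fderiv ?_
  ext v
  simp only [_root_.add_apply, _root_.smul_apply, _root_.sub_apply, smul_eq_mul, neg_mul, mul_neg]
  field_simp
  ring

open ContinuousLinearMap in
theorem gammaJacobian_eq {w τ1 τ2 : ℝ} (hs : w ^ 2 * τ2 + τ1 ≠ 0) :
    gammaJacobian (w, τ1, τ2) =
      !![τ2 * (τ1 - w ^ 2 * τ2) / (w ^ 2 * τ2 + τ1) ^ 2, -(w * τ2) / (w ^ 2 * τ2 + τ1) ^ 2,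
          w * τ1 / (w ^ 2 * τ2 + τ1) ^ 2;
        2 * w * τ2, 1, w ^ 2;
        -(2 * w * τ1 * τ2 ^ 2) / (w ^ 2 * τ2 + τ1) ^ 2, w ^ 2 * τ2 ^ 2 / (w ^ 2 * τ2 + τ1) ^ 2,
          τ1 ^ 2 / (w ^ 2 * τ2 + τ1) ^ 2] := by
  set p : ℝ × ℝ × ℝ := (w, τ1, τ2)
  have hw : HasFDerivAt (fun q : ℝ × ℝ × ℝ => q.1) (fst ℝ ℝ (ℝ × ℝ)) p := hasFDerivAt_fst
  have hτ1 : HasFDerivAt (fun q : ℝ × ℝ × ℝ => q.2.1) ((fst ℝ ℝ ℝ).comp (snd ℝ ℝ (ℝ × ℝ))) p :=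
    hasFDerivAt_fst.comp p hasFDerivAt_snd
  have hτ2 : HasFDerivAt (fun q : ℝ × ℝ × ℝ => q.2.2) ((snd ℝ ℝ ℝ).comp (snd ℝ ℝ (ℝ × ℝ))) p :=
    hasFDerivAt_snd.comp p hasFDerivAt_snd
  have hγ1 : HasFDerivAt (gammaComp 1) _ p := ((hw.pow 2).fun_mul hτ2).add hτ1
  have hγ0 : HasFDerivAt (gammaComp 0) _ p := (hw.fun_mul hτ2).div hγ1 hs
  have hγ2 : HasFDerivAt (gammaComp 2) _ p := (hτ1.fun_mul hτ2).div hγ1 hs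
  ext i j
  fin_cases i <;> fin_cases j <;>
    simp only [gammaJacobian, of_apply, stdDir, hγ0.fderiv, hγ1.fderiv, hγ2.fderiv, p,
      _root_.add_apply, _root_.smul_apply, _root_.sub_apply, ContinuousLinearMap.comp_apply,
      coe_fst', coe_snd', smul_eq_mul, nsmul_eq_mul, cons_val', cons_val_zero, cons_val_one,
      cons_val, cons_val_fin_one, Fin.zero_eta, Fin.mk_one, Fin.reduceFinMk] <;> field_simp <;> ring

theorem det_gammaJacobian {w τ1 τ2 : ℝ} (hs : w ^ 2 * τ2 + τ1 ≠ 0) :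
    (gammaJacobian (w, τ1, τ2)).det = τ2 / (w ^ 2 * τ2 + τ1) := by
  rw [gammaJacobian_eq hs, det_fin_three]
  simp only [of_apply, cons_val', cons_val_zero, cons_val_fin_one, cons_val_one, cons_val]
  -- `field_simp` can only cancel `s` against `hs` while `s` is an atom, not a normalised sum.
  generalize hS : w ^ 2 * τ2 + τ1 = s at hs ⊢
  field_simp
  subst hS
  ring

theorem det_fisherI1 (w : ℝ) {τ1 τ2 : ℝ} (h1 : τ1 ≠ 0) (h2 : τ2 ≠ 0) :
    (fisherI1 (w, τ1, τ2)).det = 1 / (4 * τ1 ^ 3 * τ2) := by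
  simp only [fisherI1, det_diagonal, Fin.prod_univ_three, Fin.isValue, cons_val_zero,
    cons_val_one, cons_val]
  field_simp
  ring

theorem det_fisherI2_gammaMap {w τ1 τ2 : ℝ} (h1 : τ1 ≠ 0) (h2 : τ2 ≠ 0)
    (hs : w ^ 2 * τ2 + τ1 ≠ 0) :
    (fisherI2 (gammaMap (w, τ1, τ2))).det = (w ^ 2 * τ2 + τ1) ^ 2 / (4 * τ1 ^ 3 * τ2 ^ 3) := by
  simp only [fisherI2, gammaMap, det_diagonal, Fin.prod_univ_three, Fin.isValue, cons_val_zero,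
    cons_val_one, cons_val]
  field_simp
  ring

theorem stmt_18 (w τ1 τ2 : ℝ) (h1 : 0 < τ1) (h2 : 0 < τ2) :
    (fisherI1 (w, τ1, τ2)).det =
        (fisherI2 (gammaMap (w, τ1, τ2))).det * (gammaJacobian (w, τ1, τ2)).det ^ 2 ∧
      (fisherI1 (w, τ1, τ2)).det / (fisherI2 (gammaMap (w, τ1, τ2))).det =
        (τ2 / (w ^ 2 * τ2 + τ1)) ^ 2 := by
  have hs : w ^ 2 * τ2 + τ1 ≠ 0 := by positivity
  have hτ1 := h1.ne'
  have hτ2 := h2.ne'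
  have hI2 : (fisherI2 (gammaMap (w, τ1, τ2))).det ≠ 0 := by
    rw [det_fisherI2_gammaMap hτ1 hτ2 hs]; positivity
  have hdet : (fisherI1 (w, τ1, τ2)).det =
      (fisherI2 (gammaMap (w, τ1, τ2))).det * (gammaJacobian (w, τ1, τ2)).det ^ 2 := by
    rw [det_fisherI1 w hτ1 hτ2, det_fisherI2_gammaMap hτ1 hτ2 hs, det_gammaJacobian hs]
    field_simp
  refine ⟨hdet, ?_⟩
  rw [hdet, mul_div_cancel_left₀ _ hI2, det_gammaJacobian hs]
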